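/- Let G be a finite connected simple graph, let H be a connected spanning subgraph of G, let (T,r) be a DFS tree of H rooted at r, and let k ≥ 1 be a natural number. Suppose that every edge of G that is not an edge of H has both endpoints in D_v for some vertex v of depth exactly k in (T,r), where D_v is the descendant set of v. Then there exists a DFS tree (T*, r) of G rooted at r such that every vertex of depth at most k in (T,r) has the same parent in T* as in T; in particular, T* agrees with T on the top k levels. -/

import Mathlib

/-- `u` lies on the unique path in `T` from `r` to `v`
(characterized in a tree via distances). -/
def IsAncestor {V : Type*} (T : SimpleGraph V) (r u v : V) : Prop :=
  T.dist r u + T.dist u v = T.dist r v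

/-- `u` and `v` are comparable in the rooted tree `(T, r)`. -/
def TreeComparable {V : Type*} (T : SimpleGraph V) (r u v : V) : Prop :=
  IsAncestor T r u v ∨ IsAncestor T r v u

/-- `(T, r)` is a DFS tree of `G`. -/
def IsDFSTree {V : Type*} (G T : SimpleGraph V) (r : V) : Prop :=
  T ≤ G ∧ T.IsTree ∧ ∀ u v : V, G.Adj u v → TreeComparable T r u v


/-!
Call a spanning tree of `G` admissible if it contains every edge of `T` joining two vertices of
depth at most `k`, and each of its other edges lies inside the subtree `D_w` of some vertex `w`
of depth `k`. Take an admissible tree `T'` maximising the total depth `∑ x, dist r x`.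
Admissible trees have the same ancestors as `T` at the top `k` levels and keep every `D_w` below
`w`; hence an edge of `G` whose ends are incomparable in `T'` lies in some `D_w` (by hypothesis,
or, for an edge of `H`, because `T` is a DFS tree of `H`). Cutting its shallower end `u` from its
parent and hanging it from the other end gives an admissible tree in which every descendant of
`u` is deeper, contradicting maximality. So `T'` is a DFS tree of `G`, and it keeps the parents
of the top `k` levels of `T`.
-/

section

open SimpleGraph Walk

variable {V : Type*}

def IsParent (T : SimpleGraph V) (r z w : V) : Prop :=
  T.Adj z w ∧ IsAncestor T r z w ∧ z ≠ w

def SharesAncestorAtDepth (T : SimpleGraph V) (r : V) (k : ℕ) (a b : V) : Prop :=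
  ∃ w, T.dist r w = k ∧ IsAncestor T r w a ∧ IsAncestor T r w b

section Ancestor

variable {T : SimpleGraph V} {r u v w x y z : V}

lemma isAncestor_root : IsAncestor T r r v := by simp [IsAncestor]

lemma isAncestor_refl : IsAncestor T r v v := by simp [IsAncestor]

lemma IsAncestor.dist_le (h : IsAncestor T r u v) : T.dist r u ≤ T.dist r v := by
  unfold IsAncestor at h; omega

lemma IsAncestor.antisymm (hc : T.Connected) (h₁ : IsAncestor T r u v)
    (h₂ : IsAncestor T r v u) : u = v := by
  unfold IsAncestor at h₁ h₂
  exact hc.dist_eq_zero_iff.1 (by omega)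

lemma IsAncestor.trans (hc : T.Connected) (h₁ : IsAncestor T r u v)
    (h₂ : IsAncestor T r v w) : IsAncestor T r u w := by
  unfold IsAncestor at *
  have := hc.dist_triangle (u := u) (v := v) (w := w)
  have := hc.dist_triangle (u := r) (v := u) (w := w)
  omega

lemma IsAncestor.of_dist_add_dist_eq (hc : T.Connected) (h : IsAncestor T r u w)
    (hx : T.dist u x + T.dist x w = T.dist u w) : IsAncestor T r u x := by
  unfold IsAncestor at *
  have := hc.dist_triangle (u := r) (v := u) (w := x)
  have := hc.dist_triangle (u := r) (v := x) (w := w)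
  omega

lemma IsAncestor.eq_root (hc : T.Connected) (h : IsAncestor T r u r) : u = r :=
  h.antisymm hc isAncestor_root

lemma SharesAncestorAtDepth.symm {k : ℕ} {a b : V} (h : SharesAncestorAtDepth T r k a b) :
    SharesAncestorAtDepth T r k b a :=
  let ⟨w, hw, ha, hb⟩ := h; ⟨w, hw, hb, ha⟩

lemma IsParent.dist_eq (h : IsParent T r z w) : T.dist r w = T.dist r z + 1 := by
  have h₁ := h.2.1
  rw [IsAncestor, dist_eq_one_iff_adj.2 h.1] at h₁
  exact h₁.symm

lemma isParent_of_adj_of_dist_eq (h : T.Adj z w) (hd : T.dist r w = T.dist r z + 1) :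
    IsParent T r z w :=
  ⟨h, by rw [IsAncestor, dist_eq_one_iff_adj.2 h, hd], h.ne⟩

lemma SimpleGraph.Connected.exists_isAncestor_dist_eq (hc : T.Connected) {m : ℕ}
    (hm : m ≤ T.dist r y) : ∃ v, T.dist r v = m ∧ IsAncestor T r v y := by
  obtain ⟨P, -, hP⟩ := hc.exists_path_of_dist r y
  have h₁ := dist_le (P.take m)
  have h₂ := dist_le (P.drop m)
  rw [take_length] at h₁
  rw [drop_length] at h₂
  have := hc.dist_triangle (u := r) (v := P.getVert m) (w := y)
  exact ⟨P.getVert m, by omega, by unfold IsAncestor; omega⟩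

lemma SimpleGraph.Connected.exists_isParent (hc : T.Connected) (hw : w ≠ r) :
    ∃ p, IsParent T r p w := by
  have hpos : T.dist r w ≠ 0 := fun h => hw (hc.dist_eq_zero_iff.1 h).symm
  obtain ⟨p, hp, hpw⟩ :=
    hc.exists_isAncestor_dist_eq (r := r) (y := w) (m := T.dist r w - 1) (by omega)
  have hadj : T.Adj p w := by
    rw [← dist_eq_one_iff_adj]; unfold IsAncestor at hpw; omega
  exact ⟨p, isParent_of_adj_of_dist_eq hadj (by omega)⟩

end Ancestor

namespace SimpleGraph.IsTree

variable {T : SimpleGraph V} (hT : T.IsTree) {r a b c u v w y : V}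
include hT

lemma length_eq_dist {p : T.Walk a b} (hp : p.IsPath) : p.length = T.dist a b := by
  obtain ⟨q, hq, hql⟩ := hT.connected.exists_path_of_dist a b
  rw [(hT.existsUnique_path a b).unique hp hq, hql]

lemma dist_add_dist_of_mem_support {p : T.Walk a c} (hp : p.IsPath) (hb : b ∈ p.support) :
    T.dist a b + T.dist b c = T.dist a c := by
  classical
  rw [← hT.length_eq_dist (hp.takeUntil hb), ← hT.length_eq_dist (hp.dropUntil hb),
    ← length_append, p.take_spec hb, hT.length_eq_dist hp]

lemma mem_support_iff_isAncestor {p : T.Walk r v} (hp : p.IsPath) :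
    u ∈ p.support ↔ IsAncestor T r u v := by
  refine ⟨hT.dist_add_dist_of_mem_support hp, fun h => ?_⟩
  obtain ⟨q₁, -, hq₁⟩ := hT.connected.exists_path_of_dist r u
  obtain ⟨q₂, -, hq₂⟩ := hT.connected.exists_path_of_dist u v
  have hq : (q₁.append q₂).IsPath :=
    isPath_of_length_eq_dist _ (by rw [length_append, hq₁, hq₂]; exact h)
  rw [← (hT.existsUnique_path r v).unique hq hp, mem_support_append_iff]
  exact Or.inl q₁.end_mem_support

lemma isAncestor_of_isAncestor_of_dist_le (ha : IsAncestor T r a y) (hb : IsAncestor T r b y)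
    (hd : T.dist r a ≤ T.dist r b) : IsAncestor T r a b := by
  classical
  obtain ⟨P, hP, -⟩ := hT.connected.exists_path_of_dist r y
  have haP := (hT.mem_support_iff_isAncestor hP).2 ha
  have hbP := (hT.mem_support_iff_isAncestor hP).2 hb
  rw [← P.take_spec haP, mem_support_append_iff] at hbP
  unfold IsAncestor at *
  rcases hbP with hbP | hbP
  · have := hT.dist_add_dist_of_mem_support (hP.takeUntil haP) hbP
    have hba : b = a := hT.connected.dist_eq_zero_iff.1 (by omega)
    subst hba
    simp
  · have := hT.dist_add_dist_of_mem_support (hP.dropUntil haP) hbP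
    omega

lemma eq_of_isAncestor_of_dist_eq (ha : IsAncestor T r a y) (hb : IsAncestor T r b y)
    (hd : T.dist r a = T.dist r b) : a = b :=
  (hT.isAncestor_of_isAncestor_of_dist_le ha hb hd.le).antisymm hT.connected
    (hT.isAncestor_of_isAncestor_of_dist_le hb ha hd.ge)

lemma isParent_or_isParent_of_adj (h : T.Adj a b) : IsParent T r a b ∨ IsParent T r b a := by
  rcases hT.dist_eq_dist_add_one_of_adj r h with hd | hd
  · exact Or.inr (isParent_of_adj_of_dist_eq h.symm hd)
  · exact Or.inl (isParent_of_adj_of_dist_eq h hd)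

lemma isParent_unique (ha : IsParent T r a w) (hb : IsParent T r b w) : a = b :=
  hT.eq_of_isAncestor_of_dist_eq ha.2.1 hb.2.1 (by have := ha.dist_eq; have := hb.dist_eq; omega)

lemma not_adj_of_not_treeComparable (h : ¬ TreeComparable T r a b) : ¬ T.Adj a b := fun hab =>
  h ((hT.isParent_or_isParent_of_adj hab).imp (·.2.1) (·.2.1))

end SimpleGraph.IsTree

lemma SimpleGraph.Walk.IsPath.append_cons {G : SimpleGraph V} {a b c d : V} {p : G.Walk a b}
    {q : G.Walk c d} (h : G.Adj b c) (hp : p.IsPath) (hq : q.IsPath)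
    (hpq : ∀ x ∈ p.support, x ∉ q.support) : (p.append (cons h q)).IsPath := by
  rw [isPath_def, support_append, support_cons, List.tail_cons, List.nodup_append]
  exact ⟨hp.support_nodup, hq.support_nodup, fun x hx y hy hxy => hpq x hx (hxy ▸ hy)⟩

def SimpleGraph.reparent (T : SimpleGraph V) (p u v : V) : SimpleGraph V :=
  T.deleteEdges {s(p, u)} ⊔ edge u v

section Reparent

variable {T : SimpleGraph V} {r p u v x : V}

lemma SimpleGraph.edgeSet_reparent (huv : u ≠ v) :
    (T.reparent p u v).edgeSet = insert s(u, v) (T.edgeSet \ {s(p, u)}) := by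
  rw [reparent, edgeSet_sup, edgeSet_deleteEdges, edgeSet_edge_of_ne huv, Set.union_singleton]

lemma SimpleGraph.mem_edgeSet_reparent {e : Sym2 V} (he : e ∈ T.edgeSet) (hne : e ≠ s(p, u)) :
    e ∈ (T.reparent p u v).edgeSet := by
  rw [reparent, edgeSet_sup, edgeSet_deleteEdges]
  exact Or.inl ⟨he, hne⟩

lemma SimpleGraph.reparent_adj (huv : u ≠ v) : (T.reparent p u v).Adj u v :=
  Or.inr ((edge_adj ..).2 ⟨Or.inl ⟨rfl, rfl⟩, huv⟩)

namespace SimpleGraph.IsTree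

variable (hT : T.IsTree)
include hT

lemma edges_subset_reparent {P : T.Walk r x} (hP : P.IsPath) (hux : ¬ IsAncestor T r u x) :
    ∀ e ∈ P.edges, e ∈ (T.reparent p u v).edgeSet := fun _ he =>
  mem_edgeSet_reparent (P.edges_subset_edgeSet he) fun hpu => hux <|
    (hT.mem_support_iff_isAncestor hP).1 (P.snd_mem_support_of_mem_edges (hpu ▸ he))

lemma exists_path_reparent_of_not_isAncestor (hux : ¬ IsAncestor T r u x) :
    ∃ q : (T.reparent p u v).Walk r x, q.IsPath ∧ q.length = T.dist r x := by
  obtain ⟨P, hP, hPl⟩ := hT.connected.exists_path_of_dist r x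
  have hE := hT.edges_subset_reparent (p := p) (v := v) hP hux
  exact ⟨P.transfer _ hE, hP.transfer hE, by rw [length_transfer, hPl]⟩

lemma exists_path_reparent_of_isAncestor (hp : IsParent T r p u) (hvu : ¬ IsAncestor T r u v)
    (hux : IsAncestor T r u x) :
    ∃ q : (T.reparent p u v).Walk r x, q.IsPath ∧ q.length = T.dist r v + 1 + T.dist u x := by
  obtain ⟨Q₁, hQ₁, hQ₁l⟩ := hT.connected.exists_path_of_dist r v
  obtain ⟨Q₂, hQ₂, hQ₂l⟩ := hT.connected.exists_path_of_dist u x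
  have hE₁ := hT.edges_subset_reparent (p := p) (v := v) hQ₁ hvu
  -- the path from `u` down to `x` stays among the descendants of `u`, so it avoids `p`
  have hD : ∀ y ∈ Q₂.support, IsAncestor T r u y := fun y hy =>
    hux.of_dist_add_dist_eq hT.connected (hT.dist_add_dist_of_mem_support hQ₂ hy)
  have hE₂ : ∀ e ∈ Q₂.edges, e ∈ (T.reparent p u v).edgeSet := fun _ he =>
    mem_edgeSet_reparent (Q₂.edges_subset_edgeSet he) fun hpu =>
      hp.2.2 (hp.2.1.antisymm hT.connected (hD p (Q₂.fst_mem_support_of_mem_edges (hpu ▸ he))))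
  have huv : u ≠ v := fun h => hvu (h ▸ isAncestor_refl)
  refine ⟨(Q₁.transfer _ hE₁).append (cons (reparent_adj huv).symm (Q₂.transfer _ hE₂)),
    (hQ₁.transfer hE₁).append_cons _ (hQ₂.transfer hE₂) fun y hy₁ hy₂ => ?_, ?_⟩
  · rw [support_transfer] at hy₁ hy₂
    exact hvu ((hD y hy₂).trans hT.connected ((hT.mem_support_iff_isAncestor hQ₁).1 hy₁))
  · rw [length_append, length_cons, length_transfer, length_transfer, hQ₁l, hQ₂l]; omega

lemma reparent_isTree [Finite V] (hp : IsParent T r p u) (hvu : ¬ IsAncestor T r u v)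
    (hadj : ¬ T.Adj u v) : (T.reparent p u v).IsTree := by
  have huv : u ≠ v := fun h => hvu (h ▸ isAncestor_refl)
  refine isTree_iff_connected_and_card.2
    ⟨(connected_iff_exists_forall_reachable _).2 ⟨r, ?_⟩, ?_⟩
  · intro x
    by_cases hux : IsAncestor T r u x
    · obtain ⟨q, -⟩ := hT.exists_path_reparent_of_isAncestor hp hvu hux
      exact ⟨q⟩
    · obtain ⟨q, -⟩ := hT.exists_path_reparent_of_not_isAncestor (p := p) (v := v) hux
      exact ⟨q⟩
  · have hpu : s(p, u) ∈ T.edgeSet := hp.1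
    have hcard := (isTree_iff_connected_and_card.1 hT).2
    have hpos : 0 < T.edgeSet.ncard := (Set.ncard_pos (Set.toFinite _)).2 ⟨_, hpu⟩
    rw [Nat.card_coe_set_eq] at hcard ⊢
    rw [edgeSet_reparent huv, Set.ncard_insert_of_notMem fun h => hadj h.1,
      Set.ncard_sdiff_singleton_of_mem hpu]
    omega

lemma sum_dist_lt_sum_dist_reparent [Fintype V] (hp : IsParent T r p u)
    (hvu : ¬ IsAncestor T r u v) (hadj : ¬ T.Adj u v) (hd : T.dist r u ≤ T.dist r v) :
    ∑ x, T.dist r x < ∑ x, (T.reparent p u v).dist r x := by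
  have hT' := hT.reparent_isTree hp hvu hadj
  have hlt : ∀ x, IsAncestor T r u x → T.dist r x < (T.reparent p u v).dist r x := by
    intro x hux
    obtain ⟨q, hq, hql⟩ := hT.exists_path_reparent_of_isAncestor hp hvu hux
    rw [← hT'.length_eq_dist hq, hql, ← hux]
    omega
  refine Finset.sum_lt_sum (fun x _ => ?_) ⟨u, Finset.mem_univ u, hlt u isAncestor_refl⟩
  by_cases hux : IsAncestor T r u x
  · exact (hlt x hux).le
  · obtain ⟨q, hq, hql⟩ := hT.exists_path_reparent_of_not_isAncestor (p := p) (v := v) hux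
    rw [← hT'.length_eq_dist hq, hql]

end SimpleGraph.IsTree

end Reparent

structure IsAdmissible (G T T' : SimpleGraph V) (r : V) (k : ℕ) : Prop where
  le : T' ≤ G
  isTree : T'.IsTree
  adj_of_adj : ∀ a b, T.Adj a b → T.dist r a ≤ k → T.dist r b ≤ k → T'.Adj a b
  adj_cases : ∀ a b, T'.Adj a b →
    (T.Adj a b ∧ T.dist r a ≤ k ∧ T.dist r b ≤ k) ∨ SharesAncestorAtDepth T r k a b

section Admissible

variable {G T T' : SimpleGraph V} {r a b p u v w y z : V} {k : ℕ}

lemma IsParent.adj_cases (hc : T.Connected) (h : IsParent T r a b) :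
    (T.Adj a b ∧ T.dist r a ≤ k ∧ T.dist r b ≤ k) ∨ SharesAncestorAtDepth T r k a b := by
  have hd := h.dist_eq
  by_cases hb : T.dist r b ≤ k
  · exact Or.inl ⟨h.1, by omega, hb⟩
  · obtain ⟨w, hw, hwa⟩ := hc.exists_isAncestor_dist_eq (r := r) (y := a) (m := k) (by omega)
    exact Or.inr ⟨w, hw, hwa, hwa.trans hc h.2.1⟩

lemma SimpleGraph.IsTree.isAdmissible_self (hT : T.IsTree) (hTG : T ≤ G) :
    IsAdmissible G T T r k where
  le := hTG
  isTree := hT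
  adj_of_adj _ _ h _ _ := h
  adj_cases a b hab := by
    rcases hT.isParent_or_isParent_of_adj (r := r) hab with h | h
    · exact h.adj_cases hT.connected
    · rcases h.adj_cases (k := k) hT.connected with ⟨h, ha, hb⟩ | h
      · exact Or.inl ⟨h.symm, hb, ha⟩
      · exact Or.inr h.symm

namespace IsAdmissible

variable (hA : IsAdmissible G T T' r k) (hT : T.IsTree)
include hA hT

lemma edges_subset {P : T.Walk r y} (hP : P.IsPath) (hy : T.dist r y ≤ k) :
    ∀ e ∈ P.edges, e ∈ T'.edgeSet := by
  intro e he
  induction e using Sym2.ind with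
  | _ a b =>
    have ha := (hT.mem_support_iff_isAncestor hP).1 (P.fst_mem_support_of_mem_edges he)
    have hb := (hT.mem_support_iff_isAncestor hP).1 (P.snd_mem_support_of_mem_edges he)
    exact hA.adj_of_adj a b (P.edges_subset_edgeSet he) (ha.dist_le.trans hy)
      (hb.dist_le.trans hy)

lemma isAncestor_iff (hy : T.dist r y ≤ k) : IsAncestor T' r z y ↔ IsAncestor T r z y := by
  obtain ⟨P, hP, -⟩ := hT.connected.exists_path_of_dist r y
  have hE := hA.edges_subset hT hP hy
  rw [← hA.isTree.mem_support_iff_isAncestor (hP.transfer hE), support_transfer,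
    hT.mem_support_iff_isAncestor hP]

lemma isAncestor_of_dist_eq (hw : T.dist r w = k) (hy : IsAncestor T r w y) :
    IsAncestor T' r w y := by
  by_cases hr : IsAncestor T r w r
  · rw [hr.eq_root hT.connected]
    exact isAncestor_root
  obtain ⟨P, hP, -⟩ := hA.isTree.connected.exists_path_of_dist r y
  -- the last edge of `P` entering the subtree of `w` can only be the edge into `w` itself
  obtain ⟨d, hd, hin, hout⟩ := P.reverse.exists_boundary_dart {z | IsAncestor T r w z} hy hr
  have hin : IsAncestor T r w d.fst := hin
  have hfst : d.fst = w := by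
    rcases hA.adj_cases _ _ d.adj with ⟨-, hk, -⟩ | ⟨w', hw', hw'a, hw'b⟩
    · exact (hT.eq_of_isAncestor_of_dist_eq hin isAncestor_refl
        (by have := hin.dist_le; omega)).symm
    · exact absurd (hT.eq_of_isAncestor_of_dist_eq hw'a hin (hw'.trans hw.symm) ▸ hw'b) hout
  have hmem := P.reverse.dart_fst_mem_support_of_mem_darts hd
  rw [hfst, support_reverse, List.mem_reverse] at hmem
  exact (hA.isTree.mem_support_iff_isAncestor hP).1 hmem

lemma sharesAncestorAtDepth_of_not_isAncestor (hab : IsAncestor T r a b)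
    (hn : ¬ IsAncestor T' r a b) : SharesAncestorAtDepth T r k a b := by
  have hb : k < T.dist r b := by
    by_contra! hb
    exact hn ((hA.isAncestor_iff hT hb).2 hab)
  obtain ⟨w, hw, hwb⟩ := hT.connected.exists_isAncestor_dist_eq (r := r) (y := b) hb.le
  by_cases ha : k ≤ T.dist r a
  · obtain ⟨w, hw, hwa⟩ := hT.connected.exists_isAncestor_dist_eq (r := r) (y := a) ha
    exact ⟨w, hw, hwa, hwa.trans hT.connected hab⟩
  · have haw := hT.isAncestor_of_isAncestor_of_dist_le hab hwb (by omega)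
    exact absurd (((hA.isAncestor_iff hT hw.le).2 haw).trans hA.isTree.connected
      (hA.isAncestor_of_dist_eq hT hw hwb)) hn

lemma sharesAncestorAtDepth_of_not_treeComparable (hab : TreeComparable T r a b)
    (hn : ¬ TreeComparable T' r a b) : SharesAncestorAtDepth T r k a b := by
  rw [TreeComparable, not_or] at hn
  rcases hab with h | h
  · exact hA.sharesAncestorAtDepth_of_not_isAncestor hT h hn.1
  · exact (hA.sharesAncestorAtDepth_of_not_isAncestor hT h hn.2).symm

lemma reparent [Finite V] (huv : G.Adj u v) (hs : SharesAncestorAtDepth T r k u v)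
    (hn : ¬ TreeComparable T' r u v) (hp : IsParent T' r p u) :
    IsAdmissible G T (T'.reparent p u v) r k where
  le := sup_le ((deleteEdges_le _).trans hA.le) ((edge_le_iff _).2 (Or.inr huv))
  isTree := hA.isTree.reparent_isTree hp (fun h => hn (Or.inl h))
    (hA.isTree.not_adj_of_not_treeComparable hn)
  adj_of_adj a b hab ha hb := by
    obtain ⟨w, hw, hwu, hwv⟩ := hs
    have hu : k < T.dist r u := by
      rcases hwu.dist_le.lt_or_eq with h | h
      · omega
      · obtain rfl := hT.eq_of_isAncestor_of_dist_eq hwu isAncestor_refl h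
        exact absurd (Or.inl (hA.isAncestor_of_dist_eq hT hw hwv)) hn
    refine (mem_edgeSet _).1 (mem_edgeSet_reparent (hA.adj_of_adj a b hab ha hb) fun h => ?_)
    rw [Sym2.eq_iff] at h
    rcases h with ⟨-, rfl⟩ | ⟨rfl, -⟩ <;> omega
  adj_cases a b hab := by
    rcases hab with ⟨hab, -⟩ | hab
    · exact hA.adj_cases a b hab
    · rcases ((edge_adj ..).1 hab).1 with ⟨rfl, rfl⟩ | ⟨rfl, rfl⟩
      · exact Or.inr hs
      · exact Or.inr hs.symm

lemma isParent_of_isParent (hw : T.dist r w ≤ k) (h : IsParent T r z w) : IsParent T' r z w :=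
  ⟨hA.adj_of_adj z w h.1 (by have := h.dist_eq; omega) hw, (hA.isAncestor_iff hT hw).2 h.2.1,
    h.2.2⟩

lemma isParent_iff (hw : T.dist r w ≤ k) : IsParent T' r z w ↔ IsParent T r z w := by
  refine ⟨fun h => ?_, hA.isParent_of_isParent hT hw⟩
  have hwr : w ≠ r := by
    rintro rfl
    exact h.2.2 (h.2.1.eq_root hA.isTree.connected)
  obtain ⟨q, hq⟩ := hT.connected.exists_isParent hwr
  rwa [hA.isTree.isParent_unique h (hA.isParent_of_isParent hT hw hq)]

variable [Fintype V]
  (hmax : ∀ T'', IsAdmissible G T T'' r k → ∑ x, T''.dist r x ≤ ∑ x, T'.dist r x)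
include hmax

lemma treeComparable_of_isMax (hab : G.Adj a b) (hs : SharesAncestorAtDepth T r k a b) :
    TreeComparable T' r a b := by
  by_contra hn
  wlog hd : T'.dist r a ≤ T'.dist r b generalizing a b
  · exact this hab.symm hs.symm (fun h => hn h.symm) (by omega)
  have ha : a ≠ r := fun h => hn (Or.inl (h ▸ isAncestor_root))
  obtain ⟨p, hp⟩ := hA.isTree.connected.exists_isParent ha
  have hle := hmax _ (hA.reparent hT hab hs hn hp)
  have hlt := hA.isTree.sum_dist_lt_sum_dist_reparent hp (fun h => hn (Or.inl h))
    (hA.isTree.not_adj_of_not_treeComparable hn) hd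
  omega

lemma isDFSTree_of_isMax {H : SimpleGraph V}
    (hTH : ∀ a b, H.Adj a b → TreeComparable T r a b)
    (hcover : ∀ a b, G.Adj a b → ¬ H.Adj a b → SharesAncestorAtDepth T r k a b) :
    IsDFSTree G T' r := by
  refine ⟨hA.le, hA.isTree, fun a b hab => by_contra fun hn => hn ?_⟩
  refine hA.treeComparable_of_isMax hT hmax hab ?_
  by_cases hH : H.Adj a b
  · exact hA.sharesAncestorAtDepth_of_not_treeComparable hT (hTH a b hH) hn
  · exact hcover a b hab hH

end IsAdmissible

end Admissible

end

theorem stmt14_general {V : Type*} [Fintype V] (G H T : SimpleGraph V) (r : V) (k : ℕ)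
    (hHG : H ≤ G)
    (hT : IsDFSTree H T r)
    (hcover : ∀ a b : V, G.Adj a b → ¬ H.Adj a b →
      ∃ v : V, T.dist r v = k ∧ IsAncestor T r v a ∧ IsAncestor T r v b) :
    ∃ T' : SimpleGraph V, IsDFSTree G T' r ∧
      ∀ w : V, T.dist r w ≤ k → ∀ z : V,
        (T.Adj z w ∧ IsAncestor T r z w ∧ z ≠ w) ↔
        (T'.Adj z w ∧ IsAncestor T' r z w ∧ z ≠ w) := by
  obtain ⟨hTH, hTtree, hTdfs⟩ := hT
  have hT₀ : IsAdmissible G T T r k := hTtree.isAdmissible_self (hTH.trans hHG)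
  obtain ⟨T', hA, hmax⟩ := Set.exists_max_image {T' | IsAdmissible G T T' r k}
    (fun T' => ∑ x, T'.dist r x) (Set.toFinite _) ⟨T, hT₀⟩
  exact ⟨T', hA.isDFSTree_of_isMax hTtree hmax hTdfs hcover,
    fun w hw z => (hA.isParent_iff hTtree hw).symm⟩

/-- Let `G` be a finite connected simple graph, `H` a connected spanning subgraph of `G`,
`(T,r)` a DFS tree of `H`, and `k ≥ 1`. Suppose every edge of `G` not in `H` has both
endpoints in the descendant set of some vertex of depth exactly `k` in `(T,r)`. Then there is
a DFS tree `(T*, r)` of `G` such that every vertex of depth at most `k` in `(T,r)` has the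
same parent in `T*` as in `T` (where the parent of a vertex is its unique tree neighbor that
is a proper ancestor of it). -/
theorem stmt14 {V : Type*} [Fintype V] (G H T : SimpleGraph V) (r : V) (k : ℕ)
    (hk : 1 ≤ k) (hG : G.Connected) (hHG : H ≤ G) (hH : H.Connected)
    (hT : IsDFSTree H T r)
    (hcover : ∀ a b : V, G.Adj a b → ¬ H.Adj a b →
      ∃ v : V, T.dist r v = k ∧ IsAncestor T r v a ∧ IsAncestor T r v b) :
    ∃ T' : SimpleGraph V, IsDFSTree G T' r ∧
      ∀ w : V, T.dist r w ≤ k → ∀ z : V,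
        (T.Adj z w ∧ IsAncestor T r z w ∧ z ≠ w) ↔
        (T'.Adj z w ∧ IsAncestor T' r z w ∧ z ≠ w) :=
  stmt14_general G H T r k hHG hT hcover
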